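/- L-conditioning is commutative: let κ be a ranking function on Ω, let A, B ⊆ Ω be events with κ(A), κ(Aᶜ), κ(B), κ(Bᶜ) all finite, and let x < ∞ be a finite rank. Then L-conditioning by A with strength x followed by L-conditioning by B with strength x yields the same result as performing the two L-conditionings in the opposite order: ((κ_{A↑x})_{B↑x})(C) = ((κ_{B↑x})_{A↑x})(C) for every event C. -/

import Mathlib

/-- Rank of an event. -/
noncomputable def rnk {Ω : Type*} (κ : Ω → ℕ∞) (A : Set Ω) : ℕ∞ := ⨅ w ∈ A, κ w

/-- L-conditioning, applied to any ranking function over events. -/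
noncomputable def lcondE {Ω : Type*} (r : Set Ω → ℕ∞) (A : Set Ω) (x : ℕ∞) (B : Set Ω) : ℕ∞ :=
  min (r (A ∩ B) - min (r A) x) (r (Aᶜ ∩ B) + x - min (r A) x)

/-!
Let `lshift r A x C = min (r (A ∩ C)) (r (Aᶜ ∩ C) + x)`: the rank of `C` once every world outside `A`
is raised by `x`. L-conditioning is `lshift` followed by subtracting the constant `min (r A) x`.
Two shifts commute, since both raise a world by `x` for each of `A`, `B` it misses; and when `r`
turns unions into minima, the two subtracted constants add up to
`min (min (r (A ∩ B)) (r (A ∩ Bᶜ) + x)) (min (r (Aᶜ ∩ B) + x) (x + x))`, symmetric in `A` and `B`.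
-/

open Set

theorem rnk_union {Ω : Type*} (κ : Ω → ℕ∞) (S T : Set Ω) :
    rnk κ (S ∪ T) = min (rnk κ S) (rnk κ T) :=
  iInf_union

namespace ENat

theorem min_tsub (a b c : ℕ∞) : min a b - c = min (a - c) (b - c) :=
  Monotone.map_min fun _ _ h => tsub_le_tsub_right h c

theorem add_min_tsub {y : ℕ∞} (a x : ℕ∞) (hy : y ≤ a) : y + min (a - y) x = min a (y + x) := by
  rw [← min_add_add_left, add_tsub_cancel_of_le hy]

end ENat

section Shift

variable {Ω : Type*}

noncomputable def lshift (r : Set Ω → ℕ∞) (A : Set Ω) (x : ℕ∞) (C : Set Ω) : ℕ∞ :=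
  min (r (A ∩ C)) (r (Aᶜ ∩ C) + x)

theorem lshift_comm (r : Set Ω → ℕ∞) (A B : Set Ω) (x : ℕ∞) :
    lshift (lshift r A x) B x = lshift (lshift r B x) A x := by
  funext C
  simp only [lshift, ← inter_assoc, inter_comm A B, inter_comm Aᶜ B, inter_comm A Bᶜ,
    inter_comm Aᶜ Bᶜ, ← min_add_add_right]
  exact min_min_min_comm _ _ _ _

theorem lcondE_eq_lshift_tsub (r : Set Ω → ℕ∞) (A : Set Ω) (x : ℕ∞) :
    lcondE r A x = fun C => lshift r A x C - min (r A) x :=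
  funext fun _ => (ENat.min_tsub _ _ _).symm

theorem lshift_tsub_const {s : Set Ω → ℕ∞} {c : ℕ∞} (hc : c ≠ ⊤) (hs : ∀ S, c ≤ s S)
    (B : Set Ω) (x : ℕ∞) (C : Set Ω) :
    lshift (fun S => s S - c) B x C = lshift s B x C - c := by
  rw [lshift, lshift, ENat.min_tsub,
    (ENat.addLECancellable_of_ne_top hc).tsub_add_eq_add_tsub (hs _)]

theorem antitone_of_union_eq_min {r : Set Ω → ℕ∞}
    (hr : ∀ S T, r (S ∪ T) = min (r S) (r T)) : Antitone r := fun S T h => by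
  rw [← union_eq_right.2 h, hr]
  exact min_le_left _ _

theorem min_rank_le_lshift {r : Set Ω → ℕ∞} (hr : ∀ S T, r (S ∪ T) = min (r S) (r T))
    (A : Set Ω) (x : ℕ∞) (C : Set Ω) : min (r A) x ≤ lshift r A x C :=
  le_min ((min_le_left _ _).trans (antitone_of_union_eq_min hr inter_subset_left))
    ((min_le_right _ _).trans le_add_self)

theorem lcondE_lcondE {r : Set Ω → ℕ∞} (hr : ∀ S T, r (S ∪ T) = min (r S) (r T))
    {x : ℕ∞} (hx : x ≠ ⊤) (A B C : Set Ω) :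
    lcondE (lcondE r A x) B x C = lshift (lshift r A x) B x C -
      min (min (r (A ∩ B)) (r (A ∩ Bᶜ) + x)) (min (r (Aᶜ ∩ B) + x) (x + x)) := by
  have hle := min_rank_le_lshift hr A x
  have hsplit : r A = min (r (A ∩ B)) (r (A ∩ Bᶜ)) := by rw [← hr, inter_union_compl]
  rw [lcondE_eq_lshift_tsub (lcondE r A x), lcondE_eq_lshift_tsub r A x]
  beta_reduce
  rw [lshift_tsub_const (ne_top_of_le_ne_top hx (min_le_right _ _)) hle, tsub_tsub,
    ENat.add_min_tsub _ _ (hle B)]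
  congr 1
  simp only [lshift, hsplit, ← min_add_add_right]
  apply le_antisymm <;> simp

end Shift

theorem lcond_commutative_general {Ω : Type*}
    (κ : Ω → ℕ∞) (A B : Set Ω)
    (x : ℕ∞) (hx : x < ⊤) :
    ∀ C : Set Ω, lcondE (lcondE (rnk κ) A x) B x C = lcondE (lcondE (rnk κ) B x) A x C := by
  intro C
  rw [lcondE_lcondE (rnk_union κ) hx.ne, lcondE_lcondE (rnk_union κ) hx.ne, lshift_comm,
    inter_comm B A, inter_comm B Aᶜ, inter_comm Bᶜ A, min_min_min_comm]

/-- L-conditioning is commutative: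
((κ_{A↑x})_{B↑x})(C) = ((κ_{B↑x})_{A↑x})(C) for every event C. -/
theorem lcond_commutative {Ω : Type*} [Fintype Ω] [Nonempty Ω]
    (κ : Ω → ℕ∞) (hκ : (⨅ w, κ w) = 0) (A B : Set Ω)
    (hA : rnk κ A < ⊤) (hAc : rnk κ Aᶜ < ⊤)
    (hB : rnk κ B < ⊤) (hBc : rnk κ Bᶜ < ⊤)
    (x : ℕ∞) (hx : x < ⊤) :
    ∀ C : Set Ω, lcondE (lcondE (rnk κ) A x) B x C = lcondE (lcondE (rnk κ) B x) A x C :=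
  lcond_commutative_general κ A B x hx
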